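/- (Shell separation for mismatched shapes.) Fix 0 < β₁ < β₀, and for each integer m ≥ 1 let X_m and Y_m be independent random vectors with X_m ~ MGGD(0, I_m, β₀) and Y_m ~ MGGD(0, I_m, β₁) (i.e., their joint law is the product of the two MGGD measures on ℝ^m × ℝ^m). Then for every constant K > 0, P(‖Y_m‖ > K ‖X_m‖) → 1 as m → ∞. -/

import Mathlib

/-!
Under `MGGD(0, Iₘ, β)` the variable `R = ‖X‖ ^ (2β)` has `𝔼 exp (c R) = (1 - 2c) ^ (-m/(2β))` for
`c < 1/2` (`R/2` is `Gamma(m/(2β), 1)`-distributed), so Chernoff bounds make both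
`P(‖X‖ ≥ tₘ)` and `P(‖X‖ ≤ tₘ)` exponentially small in `m`, as soon as `tₘ ^ (2β) / m` tends to
`∞`, resp. to `0`: the mass concentrates on the shell of radius `m ^ (1/(2β))`. Choosing
`1/(2β₀) < α < 1/(2β₁)`, with probability tending to one `‖Xₘ‖ < m ^ α` and `‖Yₘ‖ > K m ^ α`.
-/

open MeasureTheory Real Filter Topology

/-- The standardised MGGD(0, Iₘ, β) measure on ℝ^m: the measure with Lebesgue density
`[β Γ(m/2) / (π^{m/2} Γ(m/(2β)) 2^{m/(2β)})] exp(−(1/2)‖x‖^{2β})`. -/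
noncomputable def mggdStd (m : ℕ) (β : ℝ) : Measure (EuclideanSpace ℝ (Fin m)) :=
  volume.withDensity fun x => ENNReal.ofReal
    (β * Real.Gamma ((m : ℝ) / 2) /
        (Real.pi ^ ((m : ℝ) / 2) * Real.Gamma ((m : ℝ) / (2 * β)) *
          (2 : ℝ) ^ ((m : ℝ) / (2 * β))) *
      Real.exp (-(1 / 2) * ‖x‖ ^ (2 * β)))

open Module
open scoped ENNReal

section RadialIntegral

variable {E : Type*} [NormedAddCommGroup E] [NormedSpace ℝ E] [FiniteDimensional ℝ E]
  [MeasurableSpace E] [BorelSpace E] [Nontrivial E] (μ : Measure E) [μ.IsAddHaarMeasure]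

theorem integral_exp_neg_mul_rpow_norm {p b : ℝ} (hp : 0 < p) (hb : 0 < b) :
    ∫ x, exp (-b * ‖x‖ ^ p) ∂μ =
      μ.real (Metric.ball 0 1) * Gamma (finrank ℝ E / p + 1) * b ^ (-(finrank ℝ E : ℝ) / p) := by
  have hd : (0 : ℝ) < finrank ℝ E := Nat.cast_pos.mpr finrank_pos
  have hradial : ∫ y in Set.Ioi (0 : ℝ), y ^ (finrank ℝ E - 1) • exp (-b * y ^ p) =
      b ^ (-(finrank ℝ E : ℝ) / p) * (1 / p) * Gamma (finrank ℝ E / p) := by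
    simp_rw [← rpow_natCast _ (finrank ℝ E - 1), smul_eq_mul, Nat.cast_sub finrank_pos,
      Nat.cast_one]
    rw [integral_rpow_mul_exp_neg_mul_rpow hp (by linarith) hb, sub_add_cancel]
  rw [integral_fun_norm_addHaar μ (fun r => exp (-b * r ^ p)), hradial, nsmul_eq_mul, smul_eq_mul,
    Gamma_add_one (by positivity)]
  field_simp

theorem integrable_exp_neg_mul_rpow_norm {p b : ℝ} (hp : 0 < p) (hb : 0 < b) :
    Integrable (fun x => exp (-b * ‖x‖ ^ p)) μ := by
  refine .of_integral_ne_zero ?_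
  rw [integral_exp_neg_mul_rpow_norm μ hp hb]
  have hball : 0 < μ.real (Metric.ball 0 1) :=
    ENNReal.toReal_pos (Metric.measure_ball_pos μ 0 one_pos).ne' measure_ball_lt_top.ne
  exact (mul_pos (mul_pos hball (Gamma_pos_of_pos (by positivity))) (rpow_pos_of_pos hb _)).ne'

end RadialIntegral

theorem measure_ge_le_exp_neg_mul_lintegral_exp {α : Type*} [MeasurableSpace α] (μ : Measure α)
    {g : α → ℝ} (hg : Measurable g) (s : ℝ) :
    μ {x | s ≤ g x} ≤ ENNReal.ofReal (exp (-s)) * ∫⁻ x, ENNReal.ofReal (exp (g x)) ∂μ := by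
  have hsub : {x | s ≤ g x} ⊆ {x | ENNReal.ofReal (exp s) ≤ ENNReal.ofReal (exp (g x))} :=
    fun x hx => ENNReal.ofReal_le_ofReal (exp_le_exp.mpr hx)
  have hmarkov := mul_meas_ge_le_lintegral (μ := μ)
    (ENNReal.measurable_ofReal.comp (measurable_exp.comp hg)) (ENNReal.ofReal (exp s))
  calc μ {x | s ≤ g x}
      = ENNReal.ofReal (exp (-s)) * (ENNReal.ofReal (exp s) * μ {x | s ≤ g x}) := by
        rw [← mul_assoc, ← ENNReal.ofReal_mul (exp_pos _).le, ← exp_add, neg_add_cancel, exp_zero,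
          ENNReal.ofReal_one, one_mul]
    _ ≤ _ := by gcongr; exact (mul_le_mul_right (measure_mono hsub) _).trans hmarkov

theorem tendsto_zero_of_le_ofReal_exp {ι : Type*} {l : Filter ι} {f : ι → ℝ≥0∞} {a : ι → ℝ}
    (hf : ∀ᶠ i in l, f i ≤ ENNReal.ofReal (exp (a i))) (ha : Tendsto a l atBot) :
    Tendsto f l (𝓝 0) := by
  have hexp : Tendsto (fun i => ENNReal.ofReal (exp (a i))) l (𝓝 0) := by
    simpa using ENNReal.tendsto_ofReal (tendsto_exp_atBot.comp ha)
  exact tendsto_of_tendsto_of_tendsto_of_le_of_le' tendsto_const_nhds hexp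
    (.of_forall fun _ => bot_le) hf

theorem tendsto_nhds_one_of_le_one_of_one_le_add {ι : Type*} {l : Filter ι} {a b : ι → ℝ≥0∞}
    (ha : ∀ᶠ i in l, a i ≤ 1) (hab : ∀ᶠ i in l, 1 ≤ a i + b i) (hb : Tendsto b l (𝓝 0)) :
    Tendsto a l (𝓝 1) := by
  have hlower : Tendsto (fun i => 1 - b i) l (𝓝 1) := by
    simpa using ENNReal.Tendsto.sub tendsto_const_nhds hb (.inl ENNReal.one_ne_top)
  exact tendsto_of_tendsto_of_tendsto_of_le_of_le' hlower tendsto_const_nhds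
    (hab.mono fun _ h => tsub_le_iff_right.mpr h) ha

theorem tendsto_natCast_rpow_rpow_div_atTop {α p : ℝ} (h : 1 < α * p) :
    Tendsto (fun m : ℕ => ((m : ℝ) ^ α) ^ p / m) atTop atTop := by
  refine ((tendsto_rpow_atTop (by linarith : 0 < α * p - 1)).comp
    tendsto_natCast_atTop_atTop).congr' ?_
  filter_upwards [eventually_gt_atTop 0] with m hm
  rw [Function.comp_apply, ← rpow_mul (Nat.cast_nonneg _), rpow_sub (by positivity), rpow_one]

theorem tendsto_mul_natCast_rpow_rpow_div_zero {C α p : ℝ} (hC : 0 ≤ C) (h : α * p < 1) :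
    Tendsto (fun m : ℕ => (C * (m : ℝ) ^ α) ^ p / m) atTop (𝓝 0) := by
  have hpow := ((tendsto_rpow_neg_atTop (by linarith : 0 < 1 - α * p)).comp
    tendsto_natCast_atTop_atTop).const_mul (C ^ p)
  rw [mul_zero] at hpow
  refine hpow.congr' ?_
  filter_upwards [eventually_gt_atTop 0] with m hm
  rw [Function.comp_apply, mul_rpow hC (by positivity), ← rpow_mul (Nat.cast_nonneg _), neg_sub,
    rpow_sub (by positivity), rpow_one, mul_div_assoc]

theorem one_le_measure_prod_mul_norm_lt_add {E F : Type*} [SeminormedAddCommGroup E]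
    [SeminormedAddCommGroup F] [MeasurableSpace E] [MeasurableSpace F] (μ : Measure E)
    (ν : Measure F) [IsProbabilityMeasure μ] [IsProbabilityMeasure ν] {K : ℝ} (hK : 0 ≤ K)
    (s : ℝ) :
    1 ≤ μ.prod ν {p | K * ‖p.1‖ < ‖p.2‖} + (μ {x | s ≤ ‖x‖} + ν {y | ‖y‖ ≤ K * s}) := by
  have hsub : {p : E × F | K * ‖p.1‖ < ‖p.2‖}ᶜ ⊆
      {x | s ≤ ‖x‖} ×ˢ Set.univ ∪ Set.univ ×ˢ {y | ‖y‖ ≤ K * s} := by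
    intro p hp
    simp only [Set.mem_compl_iff, Set.mem_ofPred_eq, not_lt] at hp
    rcases le_or_gt s ‖p.1‖ with hs | hs
    · exact .inl ⟨hs, trivial⟩
    · exact .inr ⟨trivial, hp.trans (mul_le_mul_of_nonneg_left hs.le hK)⟩
  have hcompl := (measure_mono (μ := μ.prod ν) hsub).trans (measure_union_le _ _)
  simp only [Measure.prod_prod, measure_univ, mul_one, one_mul] at hcompl
  calc 1 = μ.prod ν Set.univ := measure_univ.symm
    _ ≤ _ := measure_univ_le_add_compl _
    _ ≤ _ := by gcongr

section MGGD

variable {m : ℕ} {β : ℝ}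

noncomputable def mggdNormConst (m : ℕ) (β : ℝ) : ℝ :=
  β * Gamma ((m : ℝ) / 2) /
    (π ^ ((m : ℝ) / 2) * Gamma ((m : ℝ) / (2 * β)) * (2 : ℝ) ^ ((m : ℝ) / (2 * β)))

theorem mggdStd_eq_withDensity (m : ℕ) (β : ℝ) :
    mggdStd m β = volume.withDensity fun x =>
      ENNReal.ofReal (mggdNormConst m β * exp (-(1 / 2) * ‖x‖ ^ (2 * β))) :=
  rfl

theorem mggdNormConst_mul_integral_exp (hm : 0 < m) (hβ : 0 < β) {b : ℝ} (hb : 0 < b) :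
    mggdNormConst m β * ∫ x : EuclideanSpace ℝ (Fin m), exp (-b * ‖x‖ ^ (2 * β)) =
      (2 * b) ^ (-(m : ℝ) / (2 * β)) := by
  have : Nonempty (Fin m) := ⟨⟨0, hm⟩⟩
  have hball : volume.real (Metric.ball (0 : EuclideanSpace ℝ (Fin m)) 1) =
      π ^ ((m : ℝ) / 2) / Gamma ((m : ℝ) / 2 + 1) := by
    rw [measureReal_def, EuclideanSpace.volume_ball, ENNReal.ofReal_one, one_pow, one_mul,
      ENNReal.toReal_ofReal (by positivity), Fintype.card_fin, sqrt_eq_rpow, ← rpow_natCast,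
      ← rpow_mul pi_pos.le, one_div_mul_eq_div]
  have hG₁ : 0 < Gamma ((m : ℝ) / 2) := Gamma_pos_of_pos (by positivity)
  have hG₂ : 0 < Gamma ((m : ℝ) / (2 * β)) := Gamma_pos_of_pos (by positivity)
  rw [integral_exp_neg_mul_rpow_norm _ (by positivity) hb, finrank_euclideanSpace_fin, hball,
    Gamma_add_one (by positivity), Gamma_add_one (by positivity), mggdNormConst,
    mul_rpow zero_le_two hb.le, neg_div, rpow_neg zero_le_two, rpow_neg hb.le]
  field_simp

theorem mggdNormConst_pos (hm : 0 < m) (hβ : 0 < β) : 0 < mggdNormConst m β := by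
  have hG₁ : 0 < Gamma ((m : ℝ) / 2) := Gamma_pos_of_pos (by positivity)
  have hG₂ : 0 < Gamma ((m : ℝ) / (2 * β)) := Gamma_pos_of_pos (by positivity)
  unfold mggdNormConst
  positivity

theorem lintegral_exp_mul_rpow_norm_mggdStd (hm : 0 < m) (hβ : 0 < β) {c : ℝ} (hc : c < 1 / 2) :
    ∫⁻ x, ENNReal.ofReal (exp (c * ‖x‖ ^ (2 * β))) ∂mggdStd m β =
      ENNReal.ofReal ((1 - 2 * c) ^ (-(m : ℝ) / (2 * β))) := by
  have : Nonempty (Fin m) := ⟨⟨0, hm⟩⟩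
  have hC := (mggdNormConst_pos hm hβ).le
  have hb : 0 < 1 / 2 - c := by linarith
  have hprod (x : EuclideanSpace ℝ (Fin m)) :
      ENNReal.ofReal (mggdNormConst m β * exp (-(1 / 2) * ‖x‖ ^ (2 * β))) *
          ENNReal.ofReal (exp (c * ‖x‖ ^ (2 * β))) =
        ENNReal.ofReal (mggdNormConst m β * exp (-(1 / 2 - c) * ‖x‖ ^ (2 * β))) := by
    rw [← ENNReal.ofReal_mul (by positivity), mul_assoc, ← exp_add]
    ring_nf
  rw [mggdStd_eq_withDensity, lintegral_withDensity_eq_lintegral_mul _ (by fun_prop) (by fun_prop)]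
  simp only [Pi.mul_apply, hprod]
  rw [← ofReal_integral_eq_lintegral_ofReal
      ((integrable_exp_neg_mul_rpow_norm _ (by positivity) hb).const_mul _)
      (.of_forall fun x => by positivity),
    integral_const_mul, mggdNormConst_mul_integral_exp hm hβ hb]
  ring_nf

theorem isProbabilityMeasure_mggdStd (hm : 0 < m) (hβ : 0 < β) :
    IsProbabilityMeasure (mggdStd m β) := by
  constructor
  simpa using lintegral_exp_mul_rpow_norm_mggdStd hm hβ (c := 0) (by norm_num)

theorem mggdStd_norm_ge_le (hm : 0 < m) (hβ : 0 < β) {c t : ℝ} (hc₀ : 0 ≤ c) (hc : c < 1 / 2)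
    (ht : 0 ≤ t) :
    mggdStd m β {x | t ≤ ‖x‖} ≤
      ENNReal.ofReal (exp (-(c * t ^ (2 * β)) - m * log (1 - 2 * c) / (2 * β))) := by
  have hsub : {x : EuclideanSpace ℝ (Fin m) | t ≤ ‖x‖} ⊆
      {x | c * t ^ (2 * β) ≤ c * ‖x‖ ^ (2 * β)} := fun x hx =>
    mul_le_mul_of_nonneg_left (rpow_le_rpow ht hx (by positivity)) hc₀
  refine (measure_mono hsub).trans ?_
  refine (measure_ge_le_exp_neg_mul_lintegral_exp _ (by fun_prop) _).trans_eq ?_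
  rw [lintegral_exp_mul_rpow_norm_mggdStd hm hβ hc, ← ENNReal.ofReal_mul (exp_pos _).le,
    rpow_def_of_pos (by linarith : (0 : ℝ) < 1 - 2 * c), ← exp_add]
  ring_nf

theorem mggdStd_norm_le_le (hm : 0 < m) (hβ : 0 < β) {c t : ℝ} (hc₀ : 0 ≤ c) :
    mggdStd m β {x | ‖x‖ ≤ t} ≤
      ENNReal.ofReal (exp (c * t ^ (2 * β) - m * log (1 + 2 * c) / (2 * β))) := by
  have hsub : {x : EuclideanSpace ℝ (Fin m) | ‖x‖ ≤ t} ⊆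
      {x | -c * t ^ (2 * β) ≤ -c * ‖x‖ ^ (2 * β)} := fun x hx =>
    mul_le_mul_of_nonpos_left (rpow_le_rpow (norm_nonneg x) hx (by positivity)) (by linarith)
  refine (measure_mono hsub).trans ?_
  refine (measure_ge_le_exp_neg_mul_lintegral_exp _ (by fun_prop) _).trans_eq ?_
  rw [lintegral_exp_mul_rpow_norm_mggdStd hm hβ (by linarith), ← ENNReal.ofReal_mul (exp_pos _).le,
    mul_neg, sub_neg_eq_add, rpow_def_of_pos (by linarith : (0 : ℝ) < 1 + 2 * c), ← exp_add]
  ring_nf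

theorem tendsto_mggdStd_norm_ge_zero (hβ : 0 < β) {t : ℕ → ℝ} (ht₀ : ∀ m, 0 ≤ t m)
    (ht : Tendsto (fun m => t m ^ (2 * β) / m) atTop atTop) :
    Tendsto (fun m => mggdStd m β {x | t m ≤ ‖x‖}) atTop (𝓝 0) := by
  refine tendsto_zero_of_le_ofReal_exp ((eventually_gt_atTop 0).mono fun m hm =>
    mggdStd_norm_ge_le hm hβ (c := 1 / 4) (by norm_num) (by norm_num) (ht₀ m)) ?_
  have hrate : Tendsto (fun m => -(1 / 4 * (t m ^ (2 * β) / m)) +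
      -(log (1 - 2 * (1 / 4)) / (2 * β))) atTop atBot :=
    tendsto_atBot_add_const_right _ _
      (tendsto_neg_atTop_atBot.comp (ht.const_mul_atTop (by norm_num)))
  refine (tendsto_natCast_atTop_atTop.atTop_mul_atBot₀ hrate).congr' ?_
  filter_upwards [eventually_gt_atTop 0] with m hm
  field_simp
  ring

theorem tendsto_mggdStd_norm_le_zero (hβ : 0 < β) {t : ℕ → ℝ}
    (ht : Tendsto (fun m => t m ^ (2 * β) / m) atTop (𝓝 0)) :
    Tendsto (fun m => mggdStd m β {x | ‖x‖ ≤ t m}) atTop (𝓝 0) := by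
  refine tendsto_zero_of_le_ofReal_exp ((eventually_gt_atTop 0).mono fun m hm =>
    mggdStd_norm_le_le hm hβ (c := 1 / 4) (t := t m) (by norm_num)) ?_
  have hlog : 0 < log (1 + 2 * (1 / 4)) / (2 * β) := div_pos (log_pos (by norm_num)) (by positivity)
  have hrate : Tendsto (fun m => 1 / 4 * (t m ^ (2 * β) / m) - log (1 + 2 * (1 / 4)) / (2 * β))
      atTop (𝓝 (-(log (1 + 2 * (1 / 4)) / (2 * β)))) := by
    rw [← zero_sub, ← mul_zero (1 / 4 : ℝ)]
    exact (ht.const_mul _).sub_const _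
  refine (tendsto_natCast_atTop_atTop.atTop_mul_neg (neg_neg_of_pos hlog) hrate).congr' ?_
  filter_upwards [eventually_gt_atTop 0] with m hm
  field_simp

end MGGD

/-- Shell separation for mismatched shapes: fix `0 < β₁ < β₀`, and for each
`m` let `Xₘ ~ MGGD(0, Iₘ, β₀)` and `Yₘ ~ MGGD(0, Iₘ, β₁)` be independent (joint law the
product measure). Then for every `K > 0`, `P(‖Yₘ‖ > K ‖Xₘ‖) → 1` as `m → ∞`. -/
theorem mggd_shell_separation
    (β₀ β₁ : ℝ) (hβ₁ : 0 < β₁) (h : β₁ < β₀) (K : ℝ) (hK : 0 < K) :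
    Tendsto (fun m : ℕ =>
        ((mggdStd m β₀).prod (mggdStd m β₁))
          {p : EuclideanSpace ℝ (Fin m) × EuclideanSpace ℝ (Fin m) | K * ‖p.1‖ < ‖p.2‖})
      atTop (𝓝 1) := by
  have hβ₀ : 0 < β₀ := hβ₁.trans h
  obtain ⟨α, hα₀, hα₁⟩ := exists_between (one_div_lt_one_div_of_lt (by positivity) (by linarith) :
    1 / (2 * β₀) < 1 / (2 * β₁))
  have hX := tendsto_mggdStd_norm_ge_zero hβ₀ (t := fun m => (m : ℝ) ^ α) (fun m => by positivity)
    (tendsto_natCast_rpow_rpow_div_atTop (by rwa [div_lt_iff₀ (by positivity)] at hα₀))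
  have hY := tendsto_mggdStd_norm_le_zero hβ₁ (t := fun m => K * (m : ℝ) ^ α)
    (tendsto_mul_natCast_rpow_rpow_div_zero hK.le (by rwa [lt_div_iff₀ (by positivity)] at hα₁))
  refine tendsto_nhds_one_of_le_one_of_one_le_add ?_ ?_ (by simpa using hX.add hY)
  all_goals
    filter_upwards [eventually_gt_atTop 0] with m hm
    have := isProbabilityMeasure_mggdStd hm hβ₀
    have := isProbabilityMeasure_mggdStd hm hβ₁
  · exact prob_le_one
  · exact one_le_measure_prod_mul_norm_lt_add _ _ hK.le _
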